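/- Let Δ be a simplex and σ another simplex. Then there is a PL-homeomorphism (∂σ)' ∗ Δ ≅ σ' ∗ ∂Δ between the join of the barycentric subdivision of ∂σ with Δ and the join of the barycentric subdivision of σ with ∂Δ; in particular, identifying Δ with the cone Cone(w, ∂Δ), the vertex w can be 'pushed' to the barycenter of σ. -/

import Mathlib

open Finset Set

/-- An abstract simplicial complex on vertex type `V`: a downward-closed collection of
nonempty finite subsets of `V`. -/
structure AbsSC (V : Type*) where
  faces : Set (Finset V)
  nonempty_of_mem : ∀ s ∈ faces, s.Nonempty
  down_closed : ∀ s ∈ faces, ∀ t ⊆ s, t.Nonempty → t ∈ faces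

namespace AbsSC

variable {V : Type*}

/-- The barycentric subdivision: faces are nonempty chains of faces. -/
def sd (X : AbsSC V) : AbsSC (Finset V) where
  faces := {c | c.Nonempty ∧ ↑c ⊆ X.faces ∧ IsChain (· ⊆ ·) (c : Set (Finset V))}
  nonempty_of_mem := fun _ hs => hs.1
  down_closed := fun _ hs _ hts htne =>
    ⟨htne, fun _ hx => hs.2.1 (hts hx), by
      intro a ha b hb hab
      exact hs.2.2 (Finset.coe_subset.mpr hts ha) (Finset.coe_subset.mpr hts hb) hab⟩

/-- The link of a face `σ`: faces disjoint from `σ` whose union with `σ` is a face. -/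
def link [DecidableEq V] (X : AbsSC V) (σ : Finset V) : AbsSC V where
  faces := {τ | τ.Nonempty ∧ τ ∩ σ = ∅ ∧ τ ∪ σ ∈ X.faces}
  nonempty_of_mem := fun _ hs => hs.1
  down_closed := fun s hs t hts htne => by
    refine ⟨htne, ?_, ?_⟩
    · rw [← Finset.subset_empty, ← hs.2.1]
      exact Finset.inter_subset_inter hts (le_refl σ)
    · exact X.down_closed _ hs.2.2 _ (Finset.union_subset_union hts (le_refl σ))
        (htne.mono Finset.subset_union_left)

end AbsSC

namespace AbsSC

variable {V : Type*} [DecidableEq V]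

/-- A complex is connected if any two of its vertices are joined by an edge path. -/
def ComplexConnected (P : AbsSC V) : Prop :=
  ∀ v w : V, ({v} : Finset V) ∈ P.faces → ({w} : Finset V) ∈ P.faces →
    Relation.ReflTransGen (fun a b => ({a, b} : Finset V) ∈ P.faces) v w

/-- A finite connected pure `d`-dimensional complex where every `(d-1)`-simplex lies in
one or two `d`-simplices. -/
def IsPseudomanifoldWithBoundary (d : ℕ) (P : AbsSC V) : Prop :=
  P.faces.Finite ∧ P.ComplexConnected ∧
  (∀ σ ∈ P.faces, σ.card ≤ d + 1) ∧
  (∀ σ ∈ P.faces, ∃ δ ∈ P.faces, δ.card = d + 1 ∧ σ ⊆ δ) ∧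
  (∀ δ ∈ P.faces, δ.card = d →
    1 ≤ {σ ∈ P.faces | σ.card = d + 1 ∧ δ ⊆ σ}.ncard ∧
    {σ ∈ P.faces | σ.card = d + 1 ∧ δ ⊆ σ}.ncard ≤ 2)

/-- The faces of the boundary `∂P`: faces of the `(d-1)`-simplices contained in exactly
one `d`-simplex. -/
def boundaryFaces (d : ℕ) (P : AbsSC V) : Set (Finset V) :=
  {τ | τ.Nonempty ∧ ∃ δ ∈ P.faces, δ.card = d ∧
    {σ ∈ P.faces | σ.card = d + 1 ∧ δ ⊆ σ}.ncard = 1 ∧ τ ⊆ δ}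

/-- The standard vertex embedding `v ↦ e_v`. -/
def vtx [DecidableEq V] (v : V) : V → ℝ := fun w => if w = v then 1 else 0

/-- The geometric realization of an abstract simplicial complex, inside the standard
simplex of `V → ℝ`. -/
def realize [DecidableEq V] (X : AbsSC V) : Set (V → ℝ) :=
  ⋃ σ ∈ X.faces, convexHull ℝ (vtx '' (σ : Set V))

end AbsSC

/-- A map is piecewise linear (affine) on `A` if `A` is a finite union of convex hulls of
finite sets, on each of which the map agrees with an affine map. -/
def IsPLOn {E F : Type*} [AddCommGroup E] [Module ℝ E] [AddCommGroup F] [Module ℝ F]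
    (f : E → F) (A : Set E) : Prop :=
  ∃ T : Finset (Finset E), (A = ⋃ c ∈ T, convexHull ℝ (c : Set E)) ∧
    ∀ c ∈ T, ∃ g : E →ᵃ[ℝ] F, Set.EqOn f g (convexHull ℝ (c : Set E))

/-- Two abstract simplicial complexes are PL-homeomorphic if there is a piecewise linear
bijection between their realizations with piecewise linear inverse. -/
def PLHomeo {V W : Type*} [DecidableEq V] [DecidableEq W] (X : AbsSC V) (Y : AbsSC W) :
    Prop :=
  ∃ f : (V → ℝ) → (W → ℝ), ∃ g : (W → ℝ) → (V → ℝ),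
    Set.BijOn f X.realize Y.realize ∧ IsPLOn f X.realize ∧ IsPLOn g Y.realize ∧
    (∀ x ∈ X.realize, g (f x) = x) ∧ (∀ y ∈ Y.realize, f (g y) = y)

/-- The full `m`-simplex as an abstract simplicial complex. -/
def stdSimplexC (m : ℕ) : AbsSC (Fin (m + 1)) where
  faces := {s | s.Nonempty}
  nonempty_of_mem := fun _ hs => hs
  down_closed := fun _ _ _ _ htne => htne

/-- The boundary of the `(m+1)`-simplex: the standard combinatorial `m`-sphere. -/
def stdSphereC (m : ℕ) : AbsSC (Fin (m + 2)) where
  faces := {s | s.Nonempty ∧ s ≠ Finset.univ}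
  nonempty_of_mem := fun _ hs => hs.1
  down_closed := fun s hs t hts htne =>
    ⟨htne, fun h => hs.2 (Finset.univ_subset_iff.mp (h ▸ hts))⟩

/-- A combinatorial `m`-sphere: a complex PL-homeomorphic to the boundary of an
`(m+1)`-simplex. -/
def IsCombSphere {V : Type*} [DecidableEq V] (m : ℕ) (X : AbsSC V) : Prop :=
  PLHomeo X (stdSphereC m)

/-- A combinatorial `m`-disc: a complex PL-homeomorphic to an `m`-simplex. -/
def IsCombDisc {V : Type*} [DecidableEq V] (m : ℕ) (X : AbsSC V) : Prop :=
  PLHomeo X (stdSimplexC m)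

/-- A combinatorial `m`-manifold (possibly with boundary): the link of each `p`-simplex
is a combinatorial `(m-p-1)`-sphere or `(m-p-1)`-disc. -/
def IsCombManifold {V : Type*} [DecidableEq V] (m : ℕ) (X : AbsSC V) : Prop :=
  ∀ σ ∈ X.faces, IsCombSphere (m - σ.card) (X.link σ) ∨ IsCombDisc (m - σ.card) (X.link σ)

/-- A `d`-pseudomanifold with boundary has isolated singularities: the link of every
simplex of positive dimension is PL-homeomorphic to the boundary of a `(d-k)`-simplex
(if not contained in `∂P`) or to a `(d-k-1)`-simplex (if contained in `∂P`). -/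
def HasIsolatedSingularities {V : Type*} [DecidableEq V] (d : ℕ) (P : AbsSC V) : Prop :=
  ∀ σ ∈ P.faces, 2 ≤ σ.card →
    (σ ∉ P.boundaryFaces d → IsCombSphere (d - σ.card) (P.link σ)) ∧
    (σ ∈ P.boundaryFaces d → IsCombDisc (d - σ.card) (P.link σ))

/-- The join `X ∗ Y` of two abstract simplicial complexes. -/
def joinC {α β : Type*} (X : AbsSC α) (Y : AbsSC β) : AbsSC (α ⊕ β) where
  faces := {s | s.Nonempty ∧ (s.toLeft.Nonempty → s.toLeft ∈ X.faces) ∧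
    (s.toRight.Nonempty → s.toRight ∈ Y.faces)}
  nonempty_of_mem := fun _ h => h.1
  down_closed := fun s hs t hts htne => by
    have hL : t.toLeft ⊆ s.toLeft := fun a ha =>
      Finset.mem_toLeft.mpr (hts (Finset.mem_toLeft.mp ha))
    have hR : t.toRight ⊆ s.toRight := fun a ha =>
      Finset.mem_toRight.mpr (hts (Finset.mem_toRight.mp ha))
    exact ⟨htne, fun h => X.down_closed _ (hs.2.1 (h.mono hL)) _ hL h,
      fun h => Y.down_closed _ (hs.2.2 (h.mono hR)) _ hR h⟩

/-- The boundary of the standard `k`-simplex (possibly empty, when `k = 0`). -/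
def stdBoundaryC (k : ℕ) : AbsSC (Fin (k + 1)) where
  faces := {s | s.Nonempty ∧ s ≠ Finset.univ}
  nonempty_of_mem := fun _ hs => hs.1
  down_closed := fun s hs t hts htne =>
    ⟨htne, fun h => hs.2 (Finset.univ_subset_iff.mp (h ▸ hts))⟩

/-!
`σ'` is the cone over `(∂σ)'` with apex the barycenter (the vertex `σ` of `σ'`), and `Δ` is the
cone over `∂Δ` from its barycenter, so both sides are `(∂σ)' ∗ w ∗ ∂Δ`. Concretely, for any
complex `X` on `W`, both `X ∗ Δ` and `cone X ∗ ∂Δ` live on the vertex set `W ⊔ Vert(Δ)`. A point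
`x` of `X ∗ Δ` contains the uniform mass `(m + 1) · minⱼ xⱼ` on `Δ`; moving it onto the apex
gives a point of `cone X ∗ ∂Δ`, since some `Δ`-coordinate becomes zero. The inverse spreads the
apex coordinate uniformly back over `Δ` and is linear. The forward map is linear on each piece
where a fixed `xⱼ` is minimal, and these pieces are convex hulls of the barycenter of `Δ` with
the vertices of some `A ∗ (Δ ∖ j)`.
-/

namespace AbsSC

variable {V : Type*} [DecidableEq V]

structure IsConeOver (Y X : AbsSC V) (b : V) : Prop where
  apex_notMem : ∀ s ∈ X.faces, b ∉ s
  mem_faces_iff : ∀ s, s ∈ Y.faces ↔ s.Nonempty ∧ ((s.erase b).Nonempty → s.erase b ∈ X.faces)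

lemma isConeOver_sd_stdSimplexC (n : ℕ) :
    (stdSimplexC n).sd.IsConeOver (stdBoundaryC n).sd Finset.univ := by
  refine ⟨fun s hs hb => (hs.2.1 hb).2 rfl, fun s => ⟨?_, ?_⟩⟩
  · rintro ⟨hne, hfaces, hchain⟩
    refine ⟨hne, fun hne' => ⟨hne', fun τ hτ => ?_, hchain.mono (by simp)⟩⟩
    have hτ := Finset.mem_erase.1 hτ
    exact ⟨hfaces hτ.2, hτ.1⟩
  · rintro ⟨hne, herase⟩
    have hchain : IsChain (· ⊆ ·) (insert Finset.univ ↑(s.erase Finset.univ) :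
        Set (Finset (Fin (n + 1)))) := by
      refine IsChain.insert ?_ fun τ _ _ => Or.inr (Finset.subset_univ τ)
      rcases (s.erase Finset.univ).eq_empty_or_nonempty with h | h
      · simp [h]
      · exact (herase h).2.2
    refine ⟨hne, fun τ hτ => ?_, hchain.mono ?_⟩
    · by_cases hτu : τ = Finset.univ
      · exact hτu ▸ Finset.univ_nonempty
      · have hτe : τ ∈ s.erase Finset.univ := Finset.mem_erase.2 ⟨hτu, hτ⟩
        exact ((herase ⟨τ, hτe⟩).2.1 hτe).1
    · intro τ hτ
      by_cases hτu : τ = Finset.univ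
      · exact hτu ▸ Set.mem_insert _ _
      · exact Set.mem_insert_of_mem _ (Finset.mem_erase.2 ⟨hτu, hτ⟩)

lemma sum_smul_vtx {s : Finset V} {x : V → ℝ} (hx : ∀ v ∉ s, x v = 0) :
    ∑ v ∈ s, x v • vtx v = x := by
  funext u
  by_cases hu : u ∈ s <;> simp [Finset.sum_apply, vtx, hu, hx]

lemma convexHull_vtx_subset_realize {X : AbsSC V} {s : Finset V} (hs : s ∈ X.faces) :
    convexHull ℝ (vtx '' (s : Set V)) ⊆ X.realize :=
  Set.subset_biUnion_of_mem (u := fun s : Finset V => convexHull ℝ (vtx '' (s : Set V))) hs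

variable [Fintype V]

lemma mem_convexHull_vtx_iff {s : Finset V} {x : V → ℝ} :
    x ∈ convexHull ℝ (vtx '' (s : Set V)) ↔ x ∈ stdSimplex ℝ V ∧ ∀ v ∉ s, x v = 0 := by
  constructor
  · have hconv : Convex ℝ {x : V → ℝ | ∀ v ∉ s, x v = 0} := by
      intro x hx y hy a b _ _ _ v hv
      simp [hx v hv, hy v hv]
    refine fun hx => convexHull_min ?_ ((convex_stdSimplex ℝ V).inter hconv) hx
    rintro _ ⟨v, hv, rfl⟩
    refine ⟨?_, fun w hw => if_neg (by rintro rfl; exact hw hv)⟩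
    convert ite_eq_mem_stdSimplex ℝ v using 1
    funext w
    simp [vtx, eq_comm]
  · rintro ⟨⟨h0, h1⟩, hs⟩
    rw [← sum_smul_vtx hs]
    refine (convex_convexHull ℝ _).sum_mem (fun v _ => h0 v) ?_
      (fun v hv => subset_convexHull ℝ _ (Set.mem_image_of_mem _ hv))
    rwa [Finset.sum_subset (Finset.subset_univ s) (fun v _ hv => hs v hv)]

lemma smul_add_mem_convexHull_insert_vtx {p : V → ℝ} {s : Finset V} {θ : ℝ} {y : V → ℝ}
    (hθ : 0 ≤ θ) (hy : ∀ v, 0 ≤ y v) (hsum : θ + ∑ v, y v = 1) (hys : ∀ v ∉ s, y v = 0) :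
    θ • p + y ∈ convexHull ℝ (insert p (vtx '' (s : Set V))) := by
  have hsum' : θ + ∑ v ∈ s, y v = 1 := by
    rwa [Finset.sum_subset (Finset.subset_univ s) (fun v _ hv => hys v hv)]
  have key := (convex_convexHull ℝ (insert p (vtx '' (s : Set V)))).sum_mem
    (t := Finset.insertNone s) (w := fun o => o.elim θ y) (z := fun o => o.elim p vtx)
    (by rintro (_ | v) _ <;> simp [hθ, hy])
    (by rwa [Finset.sum_insertNone])
    (by
      rintro (_ | v) hv
      · exact subset_convexHull ℝ _ (Set.mem_insert _ _)
      · exact subset_convexHull ℝ _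
          (Set.mem_insert_of_mem _ (Set.mem_image_of_mem _ (by simpa using hv))))
  rw [Finset.sum_insertNone] at key
  simpa only [Option.elim, sum_smul_vtx hys] using key

lemma mem_realize_iff {X : AbsSC V} {x : V → ℝ} :
    x ∈ X.realize ↔ x ∈ stdSimplex ℝ V ∧ ∃ s ∈ X.faces, ∀ v ∉ s, x v = 0 := by
  simp only [realize, Set.mem_iUnion, exists_prop, mem_convexHull_vtx_iff]
  tauto

lemma _root_.AffineMap.isPLOn_realize {F : Type*} [AddCommGroup F] [Module ℝ F]
    (f : (V → ℝ) →ᵃ[ℝ] F) (X : AbsSC V) : IsPLOn f X.realize := by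
  classical
  refine ⟨(Finset.univ.filter (· ∈ X.faces)).image (·.image vtx), ?_,
    fun _ _ => ⟨f, fun _ _ => rfl⟩⟩
  simp [realize, Finset.coe_image]

end AbsSC

lemma PLHomeo.of_invOn {V V' : Type*} [DecidableEq V] [DecidableEq V'] {X : AbsSC V}
    {Y : AbsSC V'} {f : (V → ℝ) → V' → ℝ} {g : (V' → ℝ) → V → ℝ}
    (hf : Set.MapsTo f X.realize Y.realize) (hg : Set.MapsTo g Y.realize X.realize)
    (hinv : Set.InvOn g f X.realize Y.realize) (hfPL : IsPLOn f X.realize)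
    (hgPL : IsPLOn g Y.realize) : PLHomeo X Y :=
  ⟨f, g, hinv.bijOn hf hg, hfPL, hgPL, hinv.1, hinv.2⟩

lemma disjSum_mem_joinC_faces {α β : Type*} {X : AbsSC α} {Y : AbsSC β} {A : Finset α}
    {B : Finset β} (hne : (A.disjSum B).Nonempty) (hA : A.Nonempty → A ∈ X.faces)
    (hB : B.Nonempty → B ∈ Y.faces) : A.disjSum B ∈ (joinC X Y).faces :=
  ⟨hne, by simpa using hA, by simpa using hB⟩

lemma mem_realize_joinC_iff {α β : Type*} [Fintype α] [DecidableEq α] [Fintype β]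
    [DecidableEq β] {X : AbsSC α} {Y : AbsSC β} {x : α ⊕ β → ℝ} :
    x ∈ (joinC X Y).realize ↔ x ∈ stdSimplex ℝ (α ⊕ β) ∧
      ∃ A B, (A.Nonempty → A ∈ X.faces) ∧ (B.Nonempty → B ∈ Y.faces) ∧
        ∀ v ∉ A.disjSum B, x v = 0 := by
  rw [AbsSC.mem_realize_iff]
  refine and_congr_right fun hx => ⟨?_, ?_⟩
  · rintro ⟨s, ⟨-, hA, hB⟩, hs⟩
    exact ⟨s.toLeft, s.toRight, hA, hB, by rwa [Finset.toLeft_disjSum_toRight]⟩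
  · rintro ⟨A, B, hA, hB, hs⟩
    refine ⟨A.disjSum B, disjSum_mem_joinC_faces ?_ hA hB, hs⟩
    by_contra hempty
    rw [Finset.not_nonempty_iff_eq_empty] at hempty
    have := hx.2
    simp [Finset.sum_eq_zero fun v _ => hs v (by simp [hempty])] at this

namespace ConeJoin

open AbsSC

noncomputable section

variable {W : Type*} {m : ℕ}

def baryRight : W ⊕ Fin (m + 1) → ℝ := Sum.elim 0 fun _ => ((m : ℝ) + 1)⁻¹

def minRight (x : W ⊕ Fin (m + 1) → ℝ) : ℝ :=
  Finset.univ.inf' Finset.univ_nonempty fun j => x (Sum.inr j)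

@[simp] lemma baryRight_inl (a : W) : (baryRight : W ⊕ Fin (m + 1) → ℝ) (Sum.inl a) = 0 := rfl

@[simp] lemma baryRight_inr (j : Fin (m + 1)) :
    (baryRight : W ⊕ Fin (m + 1) → ℝ) (Sum.inr j) = ((m : ℝ) + 1)⁻¹ := rfl

lemma minRight_le (x : W ⊕ Fin (m + 1) → ℝ) (j : Fin (m + 1)) : minRight x ≤ x (Sum.inr j) :=
  Finset.inf'_le _ (Finset.mem_univ j)

lemma le_minRight {x : W ⊕ Fin (m + 1) → ℝ} {a : ℝ} (h : ∀ j, a ≤ x (Sum.inr j)) :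
    a ≤ minRight x :=
  Finset.le_inf' _ _ fun j _ => h j

lemma exists_apply_eq_minRight (x : W ⊕ Fin (m + 1) → ℝ) :
    ∃ j, x (Sum.inr j) = minRight x := by
  obtain ⟨j, -, hj⟩ := Finset.exists_mem_eq_inf' Finset.univ_nonempty fun j => x (Sum.inr j)
  exact ⟨j, hj.symm⟩

lemma minRight_eq_of_forall_le {x : W ⊕ Fin (m + 1) → ℝ} {j : Fin (m + 1)}
    (h : ∀ k, x (Sum.inr j) ≤ x (Sum.inr k)) : minRight x = x (Sum.inr j) :=
  le_antisymm (minRight_le x j) (le_minRight h)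

lemma baryRight_mem_stdSimplex [Fintype W] :
    (baryRight : W ⊕ Fin (m + 1) → ℝ) ∈ stdSimplex ℝ _ := by
  refine ⟨by rintro (a | j) <;> simp; positivity, ?_⟩
  simp [Fintype.sum_sum_type]
  field_simp

variable [DecidableEq W]

def apexShift (b : W) : W ⊕ Fin (m + 1) → ℝ := vtx (Sum.inl b) - baryRight

def pushApex (b : W) (x : W ⊕ Fin (m + 1) → ℝ) : W ⊕ Fin (m + 1) → ℝ :=
  x + (((m : ℝ) + 1) * minRight x) • apexShift b

def pushApexAlong (b : W) (j : Fin (m + 1)) :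
    (W ⊕ Fin (m + 1) → ℝ) →ₗ[ℝ] W ⊕ Fin (m + 1) → ℝ :=
  LinearMap.id + (((m : ℝ) + 1) • LinearMap.proj (Sum.inr j)).smulRight (apexShift b)

def pullApex (b : W) : (W ⊕ Fin (m + 1) → ℝ) →ₗ[ℝ] W ⊕ Fin (m + 1) → ℝ :=
  LinearMap.id - (LinearMap.proj (Sum.inl b)).smulRight (apexShift b)

@[simp] lemma apexShift_inl (b a : W) :
    (apexShift b : W ⊕ Fin (m + 1) → ℝ) (Sum.inl a) = if a = b then 1 else 0 := by
  simp [apexShift, vtx]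

@[simp] lemma apexShift_inr (b : W) (j : Fin (m + 1)) :
    (apexShift b : W ⊕ Fin (m + 1) → ℝ) (Sum.inr j) = -((m : ℝ) + 1)⁻¹ := by
  simp [apexShift, vtx]

@[simp] lemma pushApex_inl (b a : W) (x : W ⊕ Fin (m + 1) → ℝ) :
    pushApex b x (Sum.inl a) = x (Sum.inl a) + if a = b then ((m : ℝ) + 1) * minRight x else 0 := by
  simp [pushApex]

@[simp] lemma pushApex_inr (b : W) (x : W ⊕ Fin (m + 1) → ℝ) (j : Fin (m + 1)) :
    pushApex b x (Sum.inr j) = x (Sum.inr j) - minRight x := by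
  simp [pushApex]
  field_simp
  ring

lemma pullApex_apply (b : W) (y : W ⊕ Fin (m + 1) → ℝ) :
    pullApex b y = y - y (Sum.inl b) • apexShift b := rfl

@[simp] lemma pullApex_inl (b a : W) (y : W ⊕ Fin (m + 1) → ℝ) :
    pullApex b y (Sum.inl a) = if a = b then 0 else y (Sum.inl a) := by
  by_cases h : a = b <;> simp [pullApex_apply, h]

@[simp] lemma pullApex_inr (b : W) (y : W ⊕ Fin (m + 1) → ℝ) (j : Fin (m + 1)) :
    pullApex b y (Sum.inr j) = y (Sum.inr j) + y (Sum.inl b) / ((m : ℝ) + 1) := by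
  simp [pullApex_apply, div_eq_mul_inv]

lemma pullApex_pushApex {b : W} {x : W ⊕ Fin (m + 1) → ℝ} (hx : x (Sum.inl b) = 0) :
    pullApex b (pushApex b x) = x := by
  rw [pullApex_apply, pushApex_inl, if_pos rfl, hx, zero_add, pushApex, add_sub_cancel_right]

lemma minRight_pullApex {b : W} {y : W ⊕ Fin (m + 1) → ℝ} (hy : ∀ v, 0 ≤ y v)
    (hz : ∃ j, y (Sum.inr j) = 0) : minRight (pullApex b y) = y (Sum.inl b) / ((m : ℝ) + 1) := by
  obtain ⟨j, hj⟩ := hz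
  refine le_antisymm ?_ (le_minRight fun k => ?_)
  · simpa [hj] using minRight_le (pullApex b y) j
  · simpa using hy (Sum.inr k)

lemma pushApex_pullApex {b : W} {y : W ⊕ Fin (m + 1) → ℝ} (hy : ∀ v, 0 ≤ y v)
    (hz : ∃ j, y (Sum.inr j) = 0) : pushApex b (pullApex b y) = y := by
  rw [pushApex, minRight_pullApex hy hz, mul_div_cancel₀ _ (by positivity), pullApex_apply,
    sub_add_cancel]

variable [Fintype W]

lemma sum_apexShift (b : W) : ∑ v, (apexShift b : W ⊕ Fin (m + 1) → ℝ) v = 0 := by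
  simp [Fintype.sum_sum_type]
  field_simp
  norm_num

variable {X Y : AbsSC W} {b : W}

lemma apply_apex_eq_zero (hcone : Y.IsConeOver X b) {x : W ⊕ Fin (m + 1) → ℝ}
    (hx : x ∈ (joinC X (stdSimplexC m)).realize) : x (Sum.inl b) = 0 := by
  obtain ⟨-, A, B, hA, -, hAB⟩ := mem_realize_joinC_iff.1 hx
  refine hAB _ fun hb => ?_
  rw [Finset.inl_mem_disjSum] at hb
  exact hcone.apex_notMem A (hA ⟨b, hb⟩) hb

lemma exists_apply_inr_eq_zero {y : W ⊕ Fin (m + 1) → ℝ}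
    (hy : y ∈ (joinC Y (stdBoundaryC m)).realize) : ∃ j, y (Sum.inr j) = 0 := by
  obtain ⟨-, A, B, -, hB, hAB⟩ := mem_realize_joinC_iff.1 hy
  obtain ⟨j, hj⟩ : ∃ j, j ∉ B := by
    by_contra! hall
    exact (hB ⟨0, hall 0⟩).2 (Finset.eq_univ_of_forall hall)
  exact ⟨j, hAB _ (by rwa [Finset.inr_mem_disjSum])⟩

lemma mapsTo_pushApex (hcone : Y.IsConeOver X b) :
    Set.MapsTo (pushApex (m := m) b) (joinC X (stdSimplexC m)).realize
      (joinC Y (stdBoundaryC m)).realize := by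
  intro x hx
  obtain ⟨⟨h0, h1⟩, A, B, hA, -, hAB⟩ := mem_realize_joinC_iff.1 hx
  obtain ⟨j, hj⟩ := exists_apply_eq_minRight x
  have hmin : 0 ≤ minRight x := le_minRight fun k => h0 _
  refine mem_realize_joinC_iff.2 ⟨⟨?_, ?_⟩, insert b A, B.erase j, ?_, ?_, ?_⟩
  · rintro (a | k)
    · have := h0 (Sum.inl a)
      rw [pushApex_inl]
      split_ifs <;> positivity
    · simpa using minRight_le x k
  · simp only [pushApex, Pi.add_apply, Pi.smul_apply, smul_eq_mul, Finset.sum_add_distrib,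
      ← Finset.mul_sum, sum_apexShift, h1, mul_zero, add_zero]
  · refine fun _ => (hcone.mem_faces_iff _).2 ⟨Finset.insert_nonempty _ _, fun hne => ?_⟩
    rw [Finset.erase_insert_eq_erase] at hne ⊢
    have hA' := hA (hne.mono (Finset.erase_subset _ _))
    exact X.down_closed A hA' _ (Finset.erase_subset _ _) hne
  · exact fun hne => ⟨hne, fun h => Finset.notMem_erase j B (h ▸ Finset.mem_univ j)⟩
  · rintro (a | k) hv
    · simp only [Finset.inl_mem_disjSum, Finset.mem_insert, not_or] at hv
      simp [hv.1, hAB (Sum.inl a) (by simpa using hv.2)]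
    · simp only [Finset.inr_mem_disjSum, Finset.mem_erase, not_and_or, not_not] at hv
      rcases hv with rfl | hk
      · simp [hj]
      · have hxk : x (Sum.inr k) = 0 := hAB _ (by simpa using hk)
        have := minRight_le x k
        rw [pushApex_inr, hxk]
        linarith

lemma mapsTo_pullApex (hcone : Y.IsConeOver X b) :
    Set.MapsTo (pullApex (m := m) b) (joinC Y (stdBoundaryC m)).realize
      (joinC X (stdSimplexC m)).realize := by
  intro y hy
  obtain ⟨⟨h0, h1⟩, A, B, hA, -, hAB⟩ := mem_realize_joinC_iff.1 hy
  refine mem_realize_joinC_iff.2 ⟨⟨?_, ?_⟩, A.erase b, Finset.univ, ?_, ?_, ?_⟩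
  · rintro (a | k)
    · rw [pullApex_inl]
      split_ifs
      exacts [le_rfl, h0 _]
    · have := h0 (Sum.inr k)
      have := h0 (Sum.inl b)
      rw [pullApex_inr]
      positivity
  · simp only [pullApex_apply, Pi.sub_apply, Pi.smul_apply, smul_eq_mul, Finset.sum_sub_distrib,
      ← Finset.mul_sum, sum_apexShift, h1, mul_zero, sub_zero]
  · exact fun hne => ((hcone.mem_faces_iff A).1 (hA (hne.mono (Finset.erase_subset _ _)))).2 hne
  · exact fun _ => Finset.univ_nonempty
  · rintro (a | k) hv
    · simp only [Finset.inl_mem_disjSum, Finset.mem_erase, not_and_or, not_not] at hv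
      rcases hv with rfl | ha
      · simp
      · simp [hAB (Sum.inl a) (by simpa using ha)]
    · simp at hv

def pushPiece (A : Finset W) (j : Fin (m + 1)) : Finset (W ⊕ Fin (m + 1) → ℝ) :=
  insert baryRight ((A.disjSum (Finset.univ.erase j)).image vtx)

lemma coe_pushPiece (A : Finset W) (j : Fin (m + 1)) :
    (pushPiece A j : Set (W ⊕ Fin (m + 1) → ℝ)) =
      insert baryRight (vtx '' ↑(A.disjSum (Finset.univ.erase j))) := by
  simp [pushPiece]

lemma convexHull_pushPiece_subset {A : Finset W} (hA : A.Nonempty → A ∈ X.faces)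
    (j : Fin (m + 1)) :
    convexHull ℝ ↑(pushPiece A j) ⊆ (joinC X (stdSimplexC m)).realize := by
  have hface : A.disjSum Finset.univ ∈ (joinC X (stdSimplexC m)).faces :=
    disjSum_mem_joinC_faces ⟨Sum.inr 0, by simp⟩ hA fun _ => Finset.univ_nonempty
  refine (convexHull_min ?_ (convex_convexHull ℝ _)).trans (convexHull_vtx_subset_realize hface)
  rw [coe_pushPiece]
  refine Set.insert_subset ?_ ((Set.image_mono ?_).trans (subset_convexHull ℝ _))
  · refine mem_convexHull_vtx_iff.2 ⟨baryRight_mem_stdSimplex, ?_⟩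
    rintro (a | k) hv
    · rfl
    · simp at hv
  · rintro (a | k) <;> simp

lemma exists_mem_convexHull_pushPiece {x : W ⊕ Fin (m + 1) → ℝ}
    (hx : x ∈ (joinC X (stdSimplexC m)).realize) :
    ∃ A, (A.Nonempty → A ∈ X.faces) ∧ ∃ j,
      x ∈ convexHull ℝ ↑(pushPiece (m := m) A j) := by
  obtain ⟨⟨h0, h1⟩, A, B, hA, -, hAB⟩ := mem_realize_joinC_iff.1 hx
  obtain ⟨j, hj⟩ := exists_apply_eq_minRight x
  set θ := ((m : ℝ) + 1) * minRight x with hθ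
  have hθm : θ * ((m : ℝ) + 1)⁻¹ = minRight x := by
    rw [hθ]
    field_simp
  have hsplit : x = θ • baryRight + (x - θ • baryRight) := (add_sub_cancel _ _).symm
  refine ⟨A, hA, j, ?_⟩
  rw [coe_pushPiece, hsplit]
  refine smul_add_mem_convexHull_insert_vtx
    (mul_nonneg (by positivity) (le_minRight fun k => h0 _)) ?_ ?_ ?_
  · rintro (a | k)
    · simpa using h0 _
    · simpa [hθm] using minRight_le x k
  · simp only [Pi.sub_apply, Pi.smul_apply, smul_eq_mul, Finset.sum_sub_distrib,
      ← Finset.mul_sum, h1, baryRight_mem_stdSimplex.2]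
    ring
  · rintro (a | k) hv
    · simp only [Finset.inl_mem_disjSum] at hv
      simp [hAB (Sum.inl a) (by simpa using hv)]
    · obtain rfl : k = j := by simpa using hv
      simp [hθm, hj]

lemma eqOn_pushApex_pushPiece (A : Finset W) (j : Fin (m + 1)) :
    Set.EqOn (pushApex b) (pushApexAlong b j) (convexHull ℝ ↑(pushPiece A j)) := by
  intro x hx
  have hconv : Convex ℝ {x : W ⊕ Fin (m + 1) → ℝ | ∀ k, x (Sum.inr j) ≤ x (Sum.inr k)} := by
    intro y hy z hz s t hs ht _ k
    simp only [Pi.add_apply, Pi.smul_apply, smul_eq_mul]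
    gcongr
    exacts [hy k, hz k]
  have hmin : ∀ k, x (Sum.inr j) ≤ x (Sum.inr k) := by
    refine convexHull_min ?_ hconv hx
    rw [coe_pushPiece]
    refine Set.insert_subset (fun k => le_rfl) ?_
    rintro _ ⟨v, hv, rfl⟩ k
    have hvj : Sum.inr j ≠ v := by rintro rfl; simp at hv
    simp only [vtx, if_neg hvj]
    split_ifs <;> norm_num
  simp [pushApex, pushApexAlong, minRight_eq_of_forall_le hmin]

lemma isPLOn_pushApex :
    IsPLOn (pushApex (m := m) b) (joinC X (stdSimplexC m)).realize := by
  classical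
  refine ⟨((Finset.univ.filter fun A : Finset W => A.Nonempty → A ∈ X.faces) ×ˢ Finset.univ).image
    fun p => pushPiece p.1 p.2, Set.Subset.antisymm (fun x hx => ?_) ?_, ?_⟩
  · obtain ⟨A, hA, j, hxA⟩ := exists_mem_convexHull_pushPiece hx
    refine Set.mem_iUnion₂.2 ⟨pushPiece A j, Finset.mem_image.2 ⟨(A, j), ?_, rfl⟩, hxA⟩
    exact Finset.mem_product.2 ⟨Finset.mem_filter.2 ⟨Finset.mem_univ A, hA⟩, Finset.mem_univ j⟩
  · refine Set.iUnion₂_subset fun c hc => ?_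
    obtain ⟨⟨A, j⟩, hp, rfl⟩ := Finset.mem_image.1 hc
    exact convexHull_pushPiece_subset (Finset.mem_filter.1 (Finset.mem_product.1 hp).1).2 j
  · intro c hc
    obtain ⟨⟨A, j⟩, -, rfl⟩ := Finset.mem_image.1 hc
    exact ⟨(pushApexAlong b j).toAffineMap, eqOn_pushApex_pushPiece A j⟩

theorem _root_.AbsSC.IsConeOver.plHomeo_joinC (hcone : Y.IsConeOver X b) (m : ℕ) :
    PLHomeo (joinC X (stdSimplexC m)) (joinC Y (stdBoundaryC m)) :=
  PLHomeo.of_invOn (mapsTo_pushApex hcone) (mapsTo_pullApex hcone)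
    ⟨fun _ hx => pullApex_pushApex (apply_apex_eq_zero hcone hx),
      fun _ hy => pushApex_pullApex (mem_realize_iff.1 hy).1.1 (exists_apply_inr_eq_zero hy)⟩
    isPLOn_pushApex ((pullApex b).toAffineMap.isPLOn_realize _)

end

end ConeJoin

/-- for an `n`-simplex `σ` and an `m`-simplex `Δ` there is a
PL-homeomorphism `(∂σ)' ∗ Δ ≅ σ' ∗ ∂Δ`; the cone vertex of `Δ = Cone(w, ∂Δ)` may be
pushed to the barycenter of `σ`. -/
theorem join_sdBoundary_pl_homeo (n m : ℕ) :
    PLHomeo (joinC (stdBoundaryC n).sd (stdSimplexC m))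
      (joinC (stdSimplexC n).sd (stdBoundaryC m)) :=
  (AbsSC.isConeOver_sd_stdSimplexC n).plHomeo_joinC m
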